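/- arXiv:1910.02805 — 2 statements merged into one kernel-verified Lean document; each statement's English description precedes it below -/
import Mathlib

section
/- Convergence domain of the multiple polylogarithm: let C be a composition array with sets U_1,…,U_r of cardinalities n_1,…,n_r and positive integers s_1,…,s_r, and let f_1,…,f_r ∈ T_Σ satisfy ‖f_i‖ < q^{(s_i·q − n_i)/(q−1)} for each i. Then the series Li_C(f_1,…,f_r) = Σ_{i_1 > i_2 > ⋯ > i_r ≥ 0} b_{i_1}(U_1)⋯b_{i_r}(U_r)·τ^{i_1}(f_1)⋯τ^{i_r}(f_r) / (ℓ_{i_1}^{s_1}⋯ℓ_{i_r}^{s_r}) converges in T_Σ, i.e., the general term tends to 0 in Gauss norm. -/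
/-!
Multiplicativity of the norm splits the general term into the factors
`b_{i}(U_l) τ^{i}(f_l) / ℓ_{i}^{s_l}`, and with `R_l = q^{(s_l q − n_l)/(q−1)}` the exponents of `q`
balance so that such a factor has norm exactly `(‖f_l‖ / R_l)^{q^{i}} R_l`. Since
`‖f_l‖ / R_l < 1`, the whole term is at most `(‖f_1‖ / R_1)^{i_1} ∏ R_l`, and `i_1 → ∞` along the
cofinite filter because only finitely many decreasing tuples have a bounded first entry.
-/

open Filter

noncomputable def polylogRadius (q : ℝ) (s n : ℕ) : ℝ :=
  q ^ ((s * q - n) / (q - 1))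

lemma polylogRadius_pos {q : ℝ} (hq : 0 < q) (s n : ℕ) : 0 < polylogRadius q s n :=
  Real.rpow_pos_of_pos hq _

lemma rpow_mul_pow_mul_inv_rpow_pow_eq {q : ℝ} (hq : 0 < q) (hq1 : q ≠ 1) (n s N : ℕ) (x : ℝ) :
    q ^ (n * ((N : ℝ) - 1) / (q - 1)) * x ^ N * (q ^ (q * ((N : ℝ) - 1) / (q - 1)))⁻¹ ^ s
      = (x / polylogRadius q s n) ^ N * polylogRadius q s n := by
  have hR := (polylogRadius_pos hq s n).ne'
  have hD : q - 1 ≠ 0 := sub_ne_zero.2 hq1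
  have key : q ^ (n * ((N : ℝ) - 1) / (q - 1)) * polylogRadius q s n ^ N
      * (q ^ (q * ((N : ℝ) - 1) / (q - 1)))⁻¹ ^ s = polylogRadius q s n := by
    unfold polylogRadius
    rw [← Real.rpow_neg hq.le, ← Real.rpow_natCast _ N, ← Real.rpow_natCast _ s,
      ← Real.rpow_mul hq.le, ← Real.rpow_mul hq.le, ← Real.rpow_add hq, ← Real.rpow_add hq]
    -- the exponent is `(n (N - 1) + (s q - n) N - s q (N - 1)) / (q - 1) = (s q - n) / (q - 1)`
    congr 1
    field_simp
    ring
  calc q ^ (n * ((N : ℝ) - 1) / (q - 1)) * x ^ N * (q ^ (q * ((N : ℝ) - 1) / (q - 1)))⁻¹ ^ s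
      = (x / polylogRadius q s n) ^ N * (q ^ (n * ((N : ℝ) - 1) / (q - 1))
          * polylogRadius q s n ^ N * (q ^ (q * ((N : ℝ) - 1) / (q - 1)))⁻¹ ^ s) := by
        rw [div_pow]; field_simp
    _ = (x / polylogRadius q s n) ^ N * polylogRadius q s n := by rw [key]

lemma norm_iterate_eq_pow {α : Type*} [Norm α] {τ : α → α} {q : ℕ}
    (hτ : ∀ x, ‖τ x‖ = ‖x‖ ^ q) (x : α) (i : ℕ) : ‖τ^[i] x‖ = ‖x‖ ^ q ^ i := by
  induction i with
  | zero => simp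
  | succ i ih => rw [Function.iterate_succ_apply', hτ, ih, ← pow_mul, pow_succ]

lemma norm_polylog_factor_eq {T : Type*} [NormedRing T] [NormMulClass T] [NormOneClass T]
    {q : ℕ} (hq : 1 < q) {τ : T → T} (hτ : ∀ x, ‖τ x‖ = ‖x‖ ^ q) {n s i : ℕ} {β x ℓ ℓinv : T}
    (hℓinv : ℓinv * ℓ = 1)
    (hℓ : ‖ℓ‖ = (q : ℝ) ^ ((q : ℝ) * ((q : ℝ) ^ i - 1) / ((q : ℝ) - 1)))
    (hβ : ‖β‖ = (q : ℝ) ^ ((n : ℝ) * ((q : ℝ) ^ i - 1) / ((q : ℝ) - 1))) :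
    ‖β * τ^[i] x * ℓinv ^ s‖ = (‖x‖ / polylogRadius q s n) ^ q ^ i * polylogRadius q s n := by
  have hℓinv_norm : ‖ℓinv‖ = ‖ℓ‖⁻¹ :=
    eq_inv_of_mul_eq_one_left (by rw [← norm_mul, hℓinv, norm_one])
  have hq' : (1 : ℝ) < q := by exact_mod_cast hq
  rw [norm_mul, norm_mul, norm_pow, norm_iterate_eq_pow hτ, hℓinv_norm, hℓ, hβ]
  rw [← Nat.cast_pow]
  exact rpow_mul_pow_mul_inv_rpow_pow_eq (by linarith) hq'.ne' n s (q ^ i) ‖x‖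

lemma prod_pow_pow_le_pow {ι : Type*} [Fintype ι] {c : ι → ℝ} (hc0 : ∀ l, 0 ≤ c l)
    (hc1 : ∀ l, c l ≤ 1) {q : ℕ} (hq : 1 < q) (g : ι → ℕ) (l₀ : ι) :
    ∏ l, c l ^ q ^ g l ≤ c l₀ ^ g l₀ :=
  calc ∏ l, c l ^ q ^ g l
      ≤ ∏ l ∈ {l₀}, c l ^ q ^ g l :=
        Finset.prod_anti_set_of_le_one (fun l => pow_nonneg (hc0 l) _)
          (fun l => pow_le_one₀ (hc0 l) (hc1 l)) (Finset.subset_univ _)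
    _ = c l₀ ^ q ^ g l₀ := Finset.prod_singleton _ _
    _ ≤ c l₀ ^ g l₀ := pow_le_pow_of_le_one (hc0 l₀) (hc1 l₀) (Nat.lt_pow_self hq).le

lemma tendsto_apply_bot_cofinite_atTop {ι : Type*} [Finite ι] [PartialOrder ι] [OrderBot ι] :
    Tendsto (fun g : {g : ι → ℕ // StrictAnti g} => g.1 ⊥) cofinite atTop := by
  rw [tendsto_atTop]
  intro N
  rw [eventually_cofinite]
  refine ((Set.Finite.pi fun _ => Set.finite_Iio N).preimage
    Subtype.coe_injective.injOn).subset fun g (hg : ¬N ≤ g.1 ⊥) l _ => ?_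
  exact (g.2.antitone bot_le).trans_lt (not_le.1 hg)

theorem multiple_polylog_term_tendsto_zero_general {T : Type*} [NormedCommRing T]
    (hmul : ∀ x y : T, ‖x * y‖ = ‖x‖ * ‖y‖)
    (q : ℕ) (hq : 1 < q)
    (τ : T →+* T) (hτ : ∀ x : T, ‖τ x‖ = ‖x‖ ^ q)
    (r : ℕ) (s nn : Fin r → ℕ)
    (ℓ ℓinv : ℕ → T) (hℓinv : ∀ i, ℓinv i * ℓ i = 1)
    (hℓ : ∀ i, ‖ℓ i‖ = (q : ℝ) ^ ((q : ℝ) * ((q : ℝ) ^ i - 1) / ((q : ℝ) - 1)))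
    (b : Fin r → ℕ → T)
    (hb : ∀ l i, ‖b l i‖ = (q : ℝ) ^ ((nn l : ℝ) * ((q : ℝ) ^ i - 1) / ((q : ℝ) - 1)))
    (f : Fin r → T)
    (hf : ∀ l, ‖f l‖ < (q : ℝ) ^ (((s l : ℝ) * (q : ℝ) - (nn l : ℝ)) / ((q : ℝ) - 1))) :
    Tendsto
      (fun g : {g : Fin r → ℕ // StrictAnti g} =>
        ‖∏ l : Fin r, b l (g.1 l) * (⇑τ)^[g.1 l] (f l) * ℓinv (g.1 l) ^ s l‖)
      cofinite (nhds 0) := by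
  have : NormMulClass T := ⟨hmul⟩
  rcases subsingleton_or_nontrivial T with hT | hT
  · simpa [Subsingleton.elim _ (0 : T)] using tendsto_const_nhds
  have : NormOneClass T := NormMulClass.toNormOneClass
  obtain _ | r := r
  · simp [cofinite_eq_bot]
  set R : Fin (r + 1) → ℝ := fun l => polylogRadius q (s l) (nn l)
  have hR : ∀ l, 0 < R l := fun l => polylogRadius_pos (by positivity) _ _
  have hc0 : ∀ l, 0 ≤ ‖f l‖ / R l := fun l => div_nonneg (norm_nonneg _) (hR l).le
  have hc1 : ∀ l, ‖f l‖ / R l < 1 := fun l => (div_lt_one (hR l)).2 (hf l)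
  have hbound : ∀ g : {g : Fin (r + 1) → ℕ // StrictAnti g},
      ‖∏ l, b l (g.1 l) * (⇑τ)^[g.1 l] (f l) * ℓinv (g.1 l) ^ s l‖
        ≤ (‖f ⊥‖ / R ⊥) ^ g.1 ⊥ * ∏ l, R l := fun g => by
    rw [norm_prod, Finset.prod_congr rfl fun l _ =>
      norm_polylog_factor_eq hq hτ (hℓinv _) (hℓ _) (hb l _), Finset.prod_mul_distrib]
    exact mul_le_mul_of_nonneg_right (prod_pow_pow_le_pow hc0 (fun l => (hc1 l).le) hq g.1 ⊥)
      (Finset.prod_nonneg fun l _ => (hR l).le)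
  refine squeeze_zero (fun _ => norm_nonneg _) hbound ?_
  simpa using ((tendsto_pow_atTop_nhds_zero_of_lt_one (hc0 ⊥) (hc1 ⊥)).comp
    tendsto_apply_bot_cofinite_atTop).mul_const (∏ l, R l)

/-- Convergence domain of the multiple polylogarithm: if `‖f_l‖ < q^{(s_l q − n_l)/(q−1)}`
for each `l`, then the general term of
`Li_C(f_1,…,f_r) = Σ_{i_1 > ⋯ > i_r ≥ 0} b_{i_1}(U_1)⋯b_{i_r}(U_r)·τ^{i_1}(f_1)⋯τ^{i_r}(f_r)
/ (ℓ_{i_1}^{s_1}⋯ℓ_{i_r}^{s_r})` tends to `0` in Gauss norm (along the cofinite filter on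
strictly decreasing index tuples), where `‖ℓ_i‖ = q^{q(q^i−1)/(q−1)}`,
`‖b_l(i)‖ = q^{n_l(q^i−1)/(q−1)}` and `‖τ^i f‖ = ‖f‖^{q^i}`. -/
theorem multiple_polylog_term_tendsto_zero {T : Type*} [NormedCommRing T]
    (hna : IsNonarchimedean (‖·‖ : T → ℝ))
    (hmul : ∀ x y : T, ‖x * y‖ = ‖x‖ * ‖y‖)
    (q : ℕ) (hq : 1 < q)
    (τ : T →+* T) (hτ : ∀ x : T, ‖τ x‖ = ‖x‖ ^ q)
    (r : ℕ) (s nn : Fin r → ℕ) (hs : ∀ l, 1 ≤ s l)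
    (ℓ ℓinv : ℕ → T) (hℓinv : ∀ i, ℓinv i * ℓ i = 1)
    (hℓ : ∀ i, ‖ℓ i‖ = (q : ℝ) ^ ((q : ℝ) * ((q : ℝ) ^ i - 1) / ((q : ℝ) - 1)))
    (b : Fin r → ℕ → T)
    (hb : ∀ l i, ‖b l i‖ = (q : ℝ) ^ ((nn l : ℝ) * ((q : ℝ) ^ i - 1) / ((q : ℝ) - 1)))
    (f : Fin r → T)
    (hf : ∀ l, ‖f l‖ < (q : ℝ) ^ (((s l : ℝ) * (q : ℝ) - (nn l : ℝ)) / ((q : ℝ) - 1))) :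
    Tendsto
      (fun g : {g : Fin r → ℕ // StrictAnti g} =>
        ‖∏ l : Fin r, b l (g.1 l) * (⇑τ)^[g.1 l] (f l) * ℓinv (g.1 l) ^ s l‖)
      cofinite (nhds 0) :=
  multiple_polylog_term_tendsto_zero_general hmul q hq τ hτ r s nn ℓ ℓinv hℓinv hℓ b hb f hf
end

section
/- Entireness from a twisted functional equation with identity constant term: let T be a Tate algebra over C_∞ (complete non-archimedean), Φ′ = Σ_{i=0}^{m} b′_i t^i with b′_i ∈ Mat_d(T) and b′_0 = Id_d, and Ψ′ = Σ_{n≥0} g′_n t^n ∈ Mat_{d×1}(T{t/θ}) with ‖g′_n‖ → 0 satisfying Ψ′^{(−1)} = Φ′·Ψ′. Then for every real C > 1, sup_n C^n·‖g′_n‖ < ∞; i.e., the entries of Ψ′ are entire functions of t (infinite radius of convergence). -/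
/-!
Write `x n` for the sup norm of `g n`. Since `‖σ x‖ = ‖x‖ ^ (1/q)` and the norm is ultrametric,
the twisted equation gives `‖g n‖ ^ (1/q) ≤ max ‖g n‖ S` with `S` the norm of the right-hand
side; once `‖g n‖ < 1` the first alternative forces `g n = 0`, so in either case
`x n ≤ (B · max_{1 ≤ i ≤ m} x (n - i)) ^ q` with `B = Σ_{1 ≤ i ≤ m} ‖b i‖`. Because `x n → 0` and `q > 1`, this recursion
eventually contracts by any prescribed factor `r ^ m`, so `x n = O(r ^ n)` for every `r > 0`.
-/

open Filter

noncomputable def matNorm {m k : Type*} {T : Type*} [NormedCommRing T]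
    (M : Matrix m k T) : ℝ := ⨆ p : m × k, ‖M p.1 p.2‖

noncomputable def vecNorm {m : Type*} {T : Type*} [NormedCommRing T]
    (v : m → T) : ℝ := ⨆ i, ‖v i‖

open Finset

lemma le_pow_of_rpow_inv_le_max {x S : ℝ} {q : ℕ} (hq : 1 < q) (hx0 : 0 ≤ x) (hx1 : x < 1)
    (hS : 0 ≤ S) (h : x ^ (q : ℝ)⁻¹ ≤ max x S) : x ≤ S ^ q := by
  rcases le_max_iff.1 h with h | h
  · obtain rfl : x = 0 := by
      by_contra hne
      have hq' : (q : ℝ)⁻¹ < 1 := inv_lt_one_of_one_lt₀ (by exact_mod_cast hq)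
      exact (Real.self_lt_rpow_of_lt_one (lt_of_le_of_ne hx0 (Ne.symm hne)) hx1 hq').not_ge h
    positivity
  · calc x = (x ^ (q : ℝ)⁻¹) ^ q := (Real.rpow_inv_natCast_pow hx0 (by omega)).symm
      _ ≤ S ^ q := pow_le_pow_left₀ (Real.rpow_nonneg hx0 _) h q

lemma le_mul_pow_of_le_pow_mul_prev {x : ℕ → ℝ} {r δ : ℝ} {N m : ℕ} (hr0 : 0 < r) (hr1 : r ≤ 1)
    (hδ : 0 ≤ δ) (hbase : ∀ n ≥ N, x n ≤ δ)
    (hrec : ∀ n ≥ N + m, ∀ c, 0 ≤ c → (∀ i ∈ Icc 1 m, x (n - i) ≤ c) → x n ≤ r ^ m * c) :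
    ∀ n ≥ N, x n ≤ δ / r ^ (N + m) * r ^ n := by
  set M := δ / r ^ (N + m)
  have hM : 0 ≤ M := by positivity
  intro n
  induction n using Nat.strong_induction_on with
  | _ n IH =>
    intro hn
    by_cases hnm : n < N + m
    · calc x n ≤ δ := hbase n hn
        _ = M * r ^ (N + m) := (div_mul_cancel₀ δ (pow_pos hr0 _).ne').symm
        _ ≤ M * r ^ n := mul_le_mul_of_nonneg_left (pow_le_pow_of_le_one hr0.le hr1 hnm.le) hM
    · calc x n ≤ r ^ m * (M * r ^ (n - m)) := by
            refine hrec n (by omega) _ (by positivity) fun i hi => ?_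
            obtain ⟨hi1, him⟩ := mem_Icc.1 hi
            exact (IH (n - i) (by omega) (by omega)).trans
              (mul_le_mul_of_nonneg_left (pow_le_pow_of_le_one hr0.le hr1 (by omega)) hM)
        _ = M * r ^ n := by rw [mul_left_comm, ← pow_add, Nat.add_sub_cancel' (by omega)]

theorem bddAbove_pow_mul_of_le_mul_pow_prev {x : ℕ → ℝ} {q m : ℕ} {K C : ℝ} (hq : 1 < q)
    (hK : 0 ≤ K) (hlim : Tendsto x atTop (nhds 0))
    (hrec : ∀ᶠ n in atTop, ∀ c, 0 ≤ c → (∀ i ∈ Icc 1 m, x (n - i) ≤ c) → x n ≤ K * c ^ q)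
    (hC : 1 < C) : BddAbove (Set.range fun n => C ^ n * x n) := by
  have hC0 : 0 < C := one_pos.trans hC
  set r := C⁻¹
  have hr0 : 0 < r := inv_pos.2 hC0
  have hr1 : r ≤ 1 := inv_le_one_of_one_le₀ hC.le
  -- below `δ` the superlinear recursion contracts by the factor `r ^ m`
  set δ := r ^ m / (K + 1)
  have hδ0 : 0 < δ := by positivity
  have hδ1 : δ ≤ 1 := (div_le_one (by positivity)).2 (by linarith [pow_le_one₀ hr0.le hr1 (n := m)])
  have hcontract : ∀ c, 0 ≤ c → c ≤ δ → K * c ^ q ≤ r ^ m * c := by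
    intro c hc hcδ
    have hcq : c ^ (q - 1) ≤ δ :=
      (pow_le_pow_left₀ hc hcδ _).trans (pow_le_of_le_one hδ0.le hδ1 (by omega))
    have hKδ : K * δ ≤ r ^ m := by
      rw [mul_div_assoc', div_le_iff₀ (by positivity)]
      nlinarith [pow_pos hr0 m]
    calc K * c ^ q = K * c ^ (q - 1) * c := by rw [mul_assoc, ← pow_succ, Nat.sub_add_cancel hq.le]
      _ ≤ K * δ * c := by gcongr
      _ ≤ r ^ m * c := by gcongr
  obtain ⟨N, hN⟩ := (hrec.and (hlim.eventually_lt_const hδ0)).exists_forall_of_atTop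
  have hgeom := le_mul_pow_of_le_pow_mul_prev hr0 hr1 hδ0.le (fun n hn => (hN n hn).2.le)
    fun n hn c hc hprev => by
      have hc' : 0 ≤ min c δ := le_min hc hδ0.le
      have hprev' : ∀ i ∈ Icc 1 m, x (n - i) ≤ min c δ := fun i hi =>
        le_min (hprev i hi) (hN (n - i) (by have := (mem_Icc.1 hi).2; omega)).2.le
      calc x n ≤ K * min c δ ^ q := (hN n (by omega)).1 _ hc' hprev'
        _ ≤ r ^ m * min c δ := hcontract _ hc' (min_le_right _ _)
        _ ≤ r ^ m * c := by gcongr; exact min_le_left _ _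
  refine (isBoundedUnder_of_eventually_le (a := δ / r ^ (N + m)) ?_).bddAbove_range
  filter_upwards [eventually_ge_atTop N] with n hn
  calc C ^ n * x n ≤ C ^ n * (δ / r ^ (N + m) * r ^ n) := by gcongr; exact hgeom n hn
    _ = δ / r ^ (N + m) * (C * r) ^ n := by ring
    _ = δ / r ^ (N + m) := by rw [mul_inv_cancel₀ hC0.ne', one_pow, mul_one]

section VectorNorm

variable {ι κ T : Type*} [NormedCommRing T]

lemma vecNorm_nonneg (v : ι → T) : 0 ≤ vecNorm v :=
  Real.iSup_nonneg fun _ => norm_nonneg _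

lemma matNorm_nonneg (M : Matrix ι κ T) : 0 ≤ matNorm M :=
  Real.iSup_nonneg fun _ => norm_nonneg _

lemma norm_le_vecNorm [Finite ι] (v : ι → T) (i : ι) : ‖v i‖ ≤ vecNorm v :=
  le_ciSup (Set.finite_range fun i => ‖v i‖).bddAbove i

lemma norm_le_matNorm [Finite ι] [Finite κ] (M : Matrix ι κ T) (i : ι) (j : κ) :
    ‖M i j‖ ≤ matNorm M :=
  le_ciSup (f := fun p : ι × κ => ‖M p.1 p.2‖) (Set.finite_range _).bddAbove (i, j)

lemma vecNorm_le {v : ι → T} {c : ℝ} (hc : 0 ≤ c) (h : ∀ i, ‖v i‖ ≤ c) : vecNorm v ≤ c :=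
  Real.iSup_le h hc

variable [IsUltrametricDist T]

lemma norm_mulVec_apply_le [Finite ι] [Fintype κ] (M : Matrix ι κ T) (v : κ → T) (i : ι) :
    ‖M.mulVec v i‖ ≤ matNorm M * vecNorm v :=
  IsUltrametricDist.norm_sum_le_of_forall_le_of_nonneg
    (mul_nonneg (matNorm_nonneg M) (vecNorm_nonneg v)) fun k _ =>
      (norm_mul_le _ _).trans (mul_le_mul (norm_le_matNorm M i k) (norm_le_vecNorm v k)
        (norm_nonneg _) (matNorm_nonneg M))

lemma norm_le_pow_of_norm_twist_sub_le {σ : T → T} {q : ℕ} (hq : 1 < q)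
    (hσ : ∀ x, ‖σ x‖ = ‖x‖ ^ (q : ℝ)⁻¹) {x : T} (hx : ‖x‖ < 1) {S : ℝ} (hS : 0 ≤ S)
    (h : ‖σ x - x‖ ≤ S) : ‖x‖ ≤ S ^ q := by
  refine le_pow_of_rpow_inv_le_max hq (norm_nonneg x) hx hS ?_
  calc ‖x‖ ^ (q : ℝ)⁻¹ = ‖x + (σ x - x)‖ := by rw [← hσ, add_sub_cancel]
    _ ≤ max ‖x‖ ‖σ x - x‖ := IsUltrametricDist.norm_add_le_max _ _
    _ ≤ max ‖x‖ S := max_le_max le_rfl h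

lemma vecNorm_le_pow_of_twist_sub_eq_sum {β : Type*} [Finite ι] [Fintype κ] {σ : T → T}
    {q : ℕ} (hq : 1 < q) (hσ : ∀ x, ‖σ x‖ = ‖x‖ ^ (q : ℝ)⁻¹) {v : ι → T} (hv : vecNorm v < 1)
    {s : Finset β} {b : β → Matrix ι κ T} {w : β → κ → T}
    (heq : (fun j => σ (v j)) - v = ∑ i ∈ s, (b i).mulVec (w i))
    {c : ℝ} (hc : 0 ≤ c) (hw : ∀ i ∈ s, vecNorm (w i) ≤ c) :
    vecNorm v ≤ ((∑ i ∈ s, matNorm (b i)) * c) ^ q := by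
  set B := ∑ i ∈ s, matNorm (b i)
  have hB : 0 ≤ B := sum_nonneg fun i _ => matNorm_nonneg (b i)
  refine vecNorm_le (by positivity) fun j =>
    norm_le_pow_of_norm_twist_sub_le hq hσ ((norm_le_vecNorm v j).trans_lt hv)
      (mul_nonneg hB hc) ?_
  have hj : σ (v j) - v j = ∑ i ∈ s, (b i).mulVec (w i) j := by simpa using congrFun heq j
  rw [hj]
  refine IsUltrametricDist.norm_sum_le_of_forall_le_of_nonneg (mul_nonneg hB hc) fun i hi => ?_
  exact (norm_mulVec_apply_le _ _ _).trans <| mul_le_mul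
    (single_le_sum (fun i _ => matNorm_nonneg (b i)) hi) (hw i hi) (vecNorm_nonneg _) hB

end VectorNorm

theorem entire_from_twisted_equation_general {T : Type*} [NormedCommRing T]
    (hna : IsNonarchimedean (‖·‖ : T → ℝ))
    (q : ℕ) (hq : 1 < q)
    (σ : T →+* T) (hσ : ∀ x : T, ‖σ x‖ = ‖x‖ ^ ((q : ℝ))⁻¹)
    (d m : ℕ) (b : ℕ → Matrix (Fin d) (Fin d) T)
    (g : ℕ → (Fin d → T))
    (hdecay : Tendsto (fun n => vecNorm (g n)) atTop (nhds 0))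
    (hfe : ∀ n, ((fun j => σ (g n j)) - g n)
      = ∑ i ∈ Finset.Icc 1 (min n m), (b i).mulVec (g (n - i))) :
    ∀ C : ℝ, 1 < C → BddAbove (Set.range fun n => C ^ n * vecNorm (g n)) := by
  intro C hC
  have := IsUltrametricDist.isUltrametricDist_of_isNonarchimedean_norm hna
  have hB : 0 ≤ ∑ i ∈ Icc 1 m, matNorm (b i) := sum_nonneg fun i _ => matNorm_nonneg (b i)
  refine bddAbove_pow_mul_of_le_mul_pow_prev (m := m) hq (pow_nonneg hB q) hdecay ?_ hC
  filter_upwards [eventually_ge_atTop m, hdecay.eventually_lt_const one_pos]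
    with n hnm hn1 c hc hprev
  rw [← mul_pow]
  exact vecNorm_le_pow_of_twist_sub_eq_sum hq hσ hn1 (min_eq_right hnm ▸ hfe n) hc hprev

/-- Entireness from a twisted functional equation with identity constant term:
if `Φ′ = Σ_{i=0}^m b′_i t^i` with `b′_0 = Id` and `Ψ′ = Σ_n g′_n t^n` (with
`‖g′_n‖ → 0`) satisfies `Ψ′^{(−1)} = Φ′·Ψ′`, i.e. coefficient-wise
`σ(g′_n) − g′_n = Σ_{i=1}^{min(n,m)} b′_i·g′_{n−i}`, then for every `C > 1` the
sequence `C^n·‖g′_n‖` is bounded: the entries of `Ψ′` are entire in `t`. -/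
theorem entire_from_twisted_equation {T : Type*} [NormedCommRing T] [CompleteSpace T]
    (hna : IsNonarchimedean (‖·‖ : T → ℝ))
    (hmul : ∀ x y : T, ‖x * y‖ = ‖x‖ * ‖y‖)
    (q : ℕ) (hq : 1 < q)
    (σ : T →+* T) (hσ : ∀ x : T, ‖σ x‖ = ‖x‖ ^ ((q : ℝ))⁻¹)
    (hfix : ∀ x : T, σ x = x → ‖x‖ < 1 → x = 0)
    (d m : ℕ) (b : ℕ → Matrix (Fin d) (Fin d) T) (hb0 : b 0 = 1)
    (g : ℕ → (Fin d → T))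
    (hdecay : Tendsto (fun n => vecNorm (g n)) atTop (nhds 0))
    (hfe : ∀ n, ((fun j => σ (g n j)) - g n)
      = ∑ i ∈ Finset.Icc 1 (min n m), (b i).mulVec (g (n - i))) :
    ∀ C : ℝ, 1 < C → BddAbove (Set.range fun n => C ^ n * vecNorm (g n)) :=
  entire_from_twisted_equation_general hna q hq σ hσ d m b g hdecay hfe
end
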